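/- arXiv:2209.04962 — 2 statements merged into one kernel-verified Lean document; each statement's English description precedes it below -/
import Mathlib

section
/- Let X, X̃ ∈ ℝ^{d×d} be two matrices of full rank, and let 𝒫 denote the orthogonal polar factor (so 𝒫(X) = M V^T where X = M D V^T is a singular value decomposition). Then ‖𝒫(X) − 𝒫(X̃)‖_F ≤ (2/(s_min(X) + s_min(X̃))) ‖X − X̃‖_F. -/
/-!
Put `W = 1 - Pᵀ P̃` and `E = X - X̃`. Then `P - P̃ = P W`, so `‖P - P̃‖ = ‖W‖`, and the symmetry of
`S`, `S̃` gives the Sylvester identity `S W + W S̃ = Pᵀ E - Eᵀ P̃`, whose right side has norm at most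
`2 ‖E‖`. Diagonalizing `S` and `S̃` by orthogonal matrices turns the left side into the entrywise
product of `(λᵢ + μⱼ)` with a matrix of the same Frobenius norm as `W`, so its norm is at least
`(λ_min + μ_min) ‖W‖`.
-/

open Matrix

attribute [local instance] frobeniusNormedAddCommGroup frobeniusNormSMulClass

namespace Matrix

variable {k l m n : Type*} [Fintype k] [Fintype l] [Fintype m] [Fintype n]

theorem frobenius_norm_eq_sqrt (A : Matrix m n ℝ) : ‖A‖ = √(∑ i, ∑ j, A i j ^ 2) := by
  simp only [frobenius_norm_def, Real.sqrt_eq_rpow, Real.rpow_two, Real.norm_eq_abs, sq_abs]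

theorem frobenius_norm_sq_eq_trace (A : Matrix m n ℝ) : ‖A‖ ^ 2 = (Aᵀ * A).trace := by
  rw [frobenius_norm_eq_sqrt, Real.sq_sqrt (by positivity), Finset.sum_comm]
  simp only [trace, diag_apply, mul_apply, transpose_apply, sq]

theorem frobenius_norm_mono {A B : Matrix m n ℝ} (h : ∀ i j, |A i j| ≤ |B i j|) : ‖A‖ ≤ ‖B‖ := by
  simp only [frobenius_norm_def, Real.norm_eq_abs]
  gcongr (∑ i, ∑ j, ?_ ^ (2 : ℝ)) ^ _ with i _ j _
  exact h i j

theorem frobenius_norm_mul_of_transpose_mul_self [DecidableEq m] {U : Matrix k m ℝ}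
    (hU : Uᵀ * U = 1) (A : Matrix m n ℝ) : ‖U * A‖ = ‖A‖ := by
  rw [← sq_eq_sq₀ (norm_nonneg _) (norm_nonneg _), frobenius_norm_sq_eq_trace,
    frobenius_norm_sq_eq_trace, transpose_mul, Matrix.mul_assoc, ← Matrix.mul_assoc Uᵀ, hU,
    Matrix.one_mul]

theorem frobenius_norm_mul_of_mul_transpose_self [DecidableEq n] {V : Matrix n l ℝ}
    (hV : V * Vᵀ = 1) (A : Matrix m n ℝ) : ‖A * V‖ = ‖A‖ := by
  rw [← frobenius_norm_transpose, transpose_mul,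
    frobenius_norm_mul_of_transpose_mul_self (by rwa [transpose_transpose]),
    frobenius_norm_transpose]

theorem mul_frobenius_norm_le_diagonal_mul_add_mul_diagonal [DecidableEq m] [DecidableEq n]
    {lam : m → ℝ} {mu : n → ℝ} {a b : ℝ} (ha : ∀ i, a ≤ lam i) (hb : ∀ j, b ≤ mu j)
    (hab : 0 ≤ a + b) (W : Matrix m n ℝ) :
    (a + b) * ‖W‖ ≤ ‖diagonal lam * W + W * diagonal mu‖ := by
  rw [← abs_of_nonneg hab, ← Real.norm_eq_abs, ← norm_smul]
  refine frobenius_norm_mono fun i j => ?_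
  have hij : (diagonal lam * W + W * diagonal mu) i j = (lam i + mu j) * W i j := by
    simp only [add_apply, diagonal_mul, mul_diagonal]; ring
  rw [hij, smul_apply, smul_eq_mul, abs_mul, abs_mul]
  gcongr
  exacts [ha i, hb j]

theorem IsHermitian.exists_orthogonal_diagonalize [DecidableEq n] {S : Matrix n n ℝ}
    (hS : S.IsHermitian) :
    ∃ U : Matrix n n ℝ, U * Uᵀ = 1 ∧ Uᵀ * S * U = diagonal hS.eigenvalues := by
  refine ⟨hS.eigenvectorUnitary, ?_, ?_⟩
  · simpa [star_eq_conjTranspose] using Unitary.coe_mul_star_self hS.eigenvectorUnitary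
  · simpa [star_eq_conjTranspose] using hS.conjStarAlgAut_star_eigenvectorUnitary

theorem mul_frobenius_norm_le_mul_add_mul [DecidableEq m] [DecidableEq n] {S : Matrix m m ℝ}
    {T : Matrix n n ℝ} (hS : S.IsHermitian) (hT : T.IsHermitian) {a b : ℝ}
    (ha : ∀ i, a ≤ hS.eigenvalues i) (hb : ∀ j, b ≤ hT.eigenvalues j) (hab : 0 ≤ a + b)
    (W : Matrix m n ℝ) : (a + b) * ‖W‖ ≤ ‖S * W + W * T‖ := by
  obtain ⟨U, hU, hUSU⟩ := hS.exists_orthogonal_diagonalize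
  obtain ⟨V, hV, hVTV⟩ := hT.exists_orthogonal_diagonalize
  have hUt : Uᵀᵀ * Uᵀ = 1 := by rwa [transpose_transpose]
  have hconj : Uᵀ * (S * W + W * T) * V =
      diagonal hS.eigenvalues * (Uᵀ * W * V) + (Uᵀ * W * V) * diagonal hT.eigenvalues := by
    rw [← hUSU, ← hVTV]
    calc Uᵀ * (S * W + W * T) * V = Uᵀ * S * (U * Uᵀ) * W * V + Uᵀ * W * (V * Vᵀ) * T * V := by
          rw [hU, hV]; simp only [Matrix.mul_one, Matrix.mul_add, Matrix.add_mul, Matrix.mul_assoc]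
      _ = _ := by simp only [Matrix.mul_assoc]
  have key := mul_frobenius_norm_le_diagonal_mul_add_mul_diagonal ha hb hab (Uᵀ * W * V)
  rwa [← hconj, frobenius_norm_mul_of_mul_transpose_self hV,
    frobenius_norm_mul_of_transpose_mul_self hUt, frobenius_norm_mul_of_mul_transpose_self hV,
    frobenius_norm_mul_of_transpose_mul_self hUt] at key

theorem sylvester_identity_of_orthogonal [DecidableEq n] {P Pt S T : Matrix n n ℝ}
    (hP : Pᵀ * P = 1) (hPt : Ptᵀ * Pt = 1) (hS : S.IsSymm) (hT : T.IsSymm) :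
    S * (1 - Pᵀ * Pt) + (1 - Pᵀ * Pt) * T = Pᵀ * (P * S - Pt * T) - (P * S - Pt * T)ᵀ * Pt := by
  simp only [transpose_sub, transpose_mul, hS.eq, hT.eq, Matrix.mul_sub, Matrix.sub_mul,
    Matrix.mul_one, Matrix.one_mul, Matrix.mul_assoc, ← Matrix.mul_assoc Pᵀ P, hP, hPt]
  abel

theorem mul_frobenius_norm_sub_le_of_polar [DecidableEq n] {P Pt S T : Matrix n n ℝ}
    (hP : Pᵀ * P = 1) (hPt : Ptᵀ * Pt = 1) (hS : S.IsHermitian) (hT : T.IsHermitian) {a b : ℝ}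
    (ha : ∀ i, a ≤ hS.eigenvalues i) (hb : ∀ j, b ≤ hT.eigenvalues j) (hab : 0 ≤ a + b) :
    (a + b) * ‖P - Pt‖ ≤ 2 * ‖P * S - Pt * T‖ := by
  set E := P * S - Pt * T
  have hPPt : P * Pᵀ = 1 := mul_eq_one_comm.mp hP
  have hPtPt : Pt * Ptᵀ = 1 := mul_eq_one_comm.mp hPt
  have hsub : P - Pt = P * (1 - Pᵀ * Pt) := by
    rw [Matrix.mul_sub, Matrix.mul_one, ← Matrix.mul_assoc, hPPt, Matrix.one_mul]
  calc (a + b) * ‖P - Pt‖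
      = (a + b) * ‖1 - Pᵀ * Pt‖ := by rw [hsub, frobenius_norm_mul_of_transpose_mul_self hP]
    _ ≤ ‖S * (1 - Pᵀ * Pt) + (1 - Pᵀ * Pt) * T‖ :=
      mul_frobenius_norm_le_mul_add_mul hS hT ha hb hab _
    _ = ‖Pᵀ * E - Eᵀ * Pt‖ := by
      rw [sylvester_identity_of_orthogonal hP hPt (isHermitian_iff_isSymm.mp hS)
        (isHermitian_iff_isSymm.mp hT)]
    _ ≤ ‖Pᵀ * E‖ + ‖Eᵀ * Pt‖ := norm_sub_le _ _
    _ = 2 * ‖E‖ := by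
      rw [frobenius_norm_mul_of_transpose_mul_self (by rwa [transpose_transpose]),
        frobenius_norm_mul_of_mul_transpose_self hPtPt, frobenius_norm_transpose, two_mul]

theorem PosDef.iInf_eigenvalues_pos [DecidableEq n] [Nonempty n] {S : Matrix n n ℝ}
    (hS : S.PosDef) : 0 < ⨅ i, hS.1.eigenvalues i := by
  obtain ⟨i, hi⟩ := exists_eq_ciInf_of_finite (f := hS.1.eigenvalues)
  exact hi ▸ hS.eigenvalues_pos i

end Matrix

theorem polar_factor_lipschitz_general {d : ℕ}
    (X Xt P Pt S St : Matrix (Fin d) (Fin d) ℝ)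
    (hP : Pᵀ * P = 1) (hPt : Ptᵀ * Pt = 1)
    (hS : S.PosDef) (hSt : St.PosDef)
    (hX : X = P * S) (hXt : Xt = Pt * St) :
    Real.sqrt (∑ i, ∑ j, (P i j - Pt i j) ^ 2) ≤
      2 / ((⨅ i, hS.1.eigenvalues i) + ⨅ i, hSt.1.eigenvalues i) *
        Real.sqrt (∑ i, ∑ j, (X i j - Xt i j) ^ 2) := by
  rcases isEmpty_or_nonempty (Fin d) with _ | _
  · simp
  have hab := add_pos hS.iInf_eigenvalues_pos hSt.iInf_eigenvalues_pos
  have key := mul_frobenius_norm_sub_le_of_polar hP hPt hS.1 hSt.1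
    (fun i => ciInf_le (Finite.bddBelow_range _) i) (fun j => ciInf_le (Finite.bddBelow_range _) j)
    hab.le
  simp only [← Matrix.sub_apply, ← frobenius_norm_eq_sqrt, hX, hXt]
  rw [div_mul_eq_mul_div, le_div_iff₀ hab, mul_comm]
  exact key

theorem polar_factor_lipschitz {d : ℕ}
    (X Xt P Pt S St : Matrix (Fin d) (Fin d) ℝ)
    (hrX : X.det ≠ 0) (hrXt : Xt.det ≠ 0)
    (hP : Pᵀ * P = 1) (hPt : Ptᵀ * Pt = 1)
    (hS : S.PosDef) (hSt : St.PosDef)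
    (hX : X = P * S) (hXt : Xt = Pt * St) :
    Real.sqrt (∑ i, ∑ j, (P i j - Pt i j) ^ 2) ≤
      2 / ((⨅ i, hS.1.eigenvalues i) + ⨅ i, hSt.1.eigenvalues i) *
        Real.sqrt (∑ i, ∑ j, (X i j - Xt i j) ^ 2) :=
  polar_factor_lipschitz_general X Xt P Pt S St hP hPt hS hSt hX hXt
end

section
/- Let V, Ṽ ∈ ℂ^{n×d} satisfy V^H V = Ṽ^H Ṽ = I_d. Then inf over O ∈ O(d) (real orthogonal, or unitary, d×d matrices) of ‖V − Ṽ O‖ is at most √2 · ‖(I_n − V V^H) Ṽ‖, where ‖·‖ is the operator norm. -/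
/-!
Write `M = Vᴴ Ṽ` and `s = ‖(1 - V Vᴴ) Ṽ‖`. Pythagoras in `Ṽ x = V (M x) + (1 - V Vᴴ) Ṽ x` gives
`(1 - s²) ‖x‖² ≤ ‖M x‖² ≤ ‖x‖²`, hence `(1 - s²) ‖x‖ ≤ ‖M x‖`. Take `O` from a polar decomposition
of `M`, so that `M O` is positive semidefinite with the singular values of `M`, all at least
`1 - s²`, as eigenvalues. Then `‖(V - Ṽ O) x‖² = 2 ‖x‖² - 2 Re ⟪x, M O x⟫ ≤ 2 s² ‖x‖²`.
-/

open Matrix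
open scoped InnerProductSpace

namespace LinearMap

variable {𝕜 E F : Type*} [RCLike 𝕜] [NormedAddCommGroup E] [InnerProductSpace 𝕜 E]
  [FiniteDimensional 𝕜 E] [NormedAddCommGroup F] [InnerProductSpace 𝕜 F] [FiniteDimensional 𝕜 F]

theorem exists_orthonormalBasis_pairwise_inner_apply_eq_zero (T : E →ₗ[𝕜] F) :
    ∃ b : OrthonormalBasis (Fin (Module.finrank 𝕜 E)) 𝕜 E,
      Pairwise fun i j ↦ ⟪T (b i), T (b j)⟫_𝕜 = 0 := by
  have hT := T.isSymmetric_adjoint_comp_self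
  refine ⟨hT.eigenvectorBasis rfl, fun i j hij ↦ ?_⟩
  dsimp only
  rw [← adjoint_inner_right, ← comp_apply, hT.apply_eigenvectorBasis, inner_smul_right,
    (hT.eigenvectorBasis rfl).orthonormal.2 hij, mul_zero]

theorem exists_orthonormalBasis_apply_eq_norm_smul (T : E →ₗ[𝕜] E) :
    ∃ b u : OrthonormalBasis (Fin (Module.finrank 𝕜 E)) 𝕜 E,
      ∀ i, T (b i) = (‖T (b i)‖ : 𝕜) • u i := by
  obtain ⟨b, hb⟩ := T.exists_orthonormalBasis_pairwise_inner_apply_eq_zero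
  set v := fun i ↦ (‖T (b i)‖⁻¹ : 𝕜) • T (b i)
  have hv : Orthonormal 𝕜 (({i | T (b i) ≠ 0} : Set _).domRestrict v) := by
    refine ⟨fun i ↦ norm_smul_inv_norm i.2, fun i j hij ↦ ?_⟩
    simp only [v, Set.domRestrict_apply, inner_smul_left, inner_smul_right,
      hb (Subtype.coe_ne_coe.mpr hij), mul_zero]
  obtain ⟨u, hu⟩ := hv.exists_orthonormalBasis_extension_of_card_eq (by simp)
  refine ⟨b, u, fun i ↦ ?_⟩
  by_cases hi : T (b i) = 0
  · simp [hi]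
  · rw [hu i hi, smul_smul, ← RCLike.ofReal_inv, ← RCLike.ofReal_mul,
      mul_inv_cancel₀ (norm_ne_zero_iff.mpr hi), RCLike.ofReal_one, one_smul]

/-- `T ∘ U` is the positive factor of a polar decomposition of `T`. -/
theorem exists_linearIsometryEquiv_le_re_inner_apply (T : E →ₗ[𝕜] E) {c : ℝ}
    (hT : ∀ x, c * ‖x‖ ≤ ‖T x‖) :
    ∃ U : E ≃ₗᵢ[𝕜] E, ∀ x, c * ‖x‖ ^ 2 ≤ RCLike.re ⟪x, T (U x)⟫_𝕜 := by
  obtain ⟨b, u, hbu⟩ := T.exists_orthonormalBasis_apply_eq_norm_smul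
  refine ⟨u.repr.trans b.repr.symm, fun x ↦ ?_⟩
  have hTU : T (b.repr.symm (u.repr x)) = ∑ i, ⟪u i, x⟫_𝕜 • (‖T (b i)‖ : 𝕜) • u i := by
    rw [← b.sum_repr_symm, map_sum]
    refine Finset.sum_congr rfl fun i _ ↦ ?_
    rw [map_smul, ← hbu i, u.repr_apply_apply]
  have hre : RCLike.re ⟪x, T (b.repr.symm (u.repr x))⟫_𝕜 =
      ∑ i, ‖T (b i)‖ * ‖⟪u i, x⟫_𝕜‖ ^ 2 := by
    simp only [hTU, inner_sum, inner_smul_right, map_sum]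
    refine Finset.sum_congr rfl fun i _ ↦ ?_
    rw [← inner_conj_symm x (u i), mul_left_comm, RCLike.mul_conj, ← RCLike.ofReal_pow,
      ← RCLike.ofReal_mul, RCLike.ofReal_re]
  calc c * ‖x‖ ^ 2 = ∑ i, c * ‖⟪u i, x⟫_𝕜‖ ^ 2 := by
        rw [← u.sum_sq_norm_inner_right, Finset.mul_sum]
    _ ≤ ∑ i, ‖T (b i)‖ * ‖⟪u i, x⟫_𝕜‖ ^ 2 := by
      gcongr with i
      simpa using hT (b i)
    _ = _ := hre.symm

end LinearMap

namespace Matrix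

variable {𝕜 : Type*} [RCLike 𝕜] {l m n : Type*} [Fintype l] [DecidableEq l] [Fintype m]
  [DecidableEq m] [Fintype n] [DecidableEq n]

theorem inner_toEuclideanLin_toEuclideanLin (A : Matrix m n 𝕜) (B : Matrix m l 𝕜)
    (x : EuclideanSpace 𝕜 n) (y : EuclideanSpace 𝕜 l) :
    ⟪toEuclideanLin A x, toEuclideanLin B y⟫_𝕜 = ⟪x, toEuclideanLin (Aᴴ * B) y⟫_𝕜 := by
  rw [toLpLin_mul_same, LinearMap.comp_apply, toEuclideanLin_conjTranspose_eq_adjoint,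
    LinearMap.adjoint_inner_right]

theorem norm_toEuclideanLin_apply {V : Matrix m n 𝕜} (hV : Vᴴ * V = 1) (x : EuclideanSpace 𝕜 n) :
    ‖toEuclideanLin V x‖ = ‖x‖ := by
  rw [@norm_eq_sqrt_re_inner 𝕜, @norm_eq_sqrt_re_inner 𝕜 _ _ _ _ x,
    inner_toEuclideanLin_toEuclideanLin, hV, toLpLin_one, LinearMap.id_apply]

theorem norm_sq_add_norm_sq_eq_norm_sq {V : Matrix m n 𝕜} (hV : Vᴴ * V = 1) (W : Matrix m l 𝕜)
    (x : EuclideanSpace 𝕜 l) :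
    ‖toEuclideanLin (Vᴴ * W) x‖ ^ 2 + ‖toEuclideanLin ((1 - V * Vᴴ) * W) x‖ ^ 2 =
      ‖toEuclideanLin W x‖ ^ 2 := by
  have hW : W = V * (Vᴴ * W) + (1 - V * Vᴴ) * W := by
    rw [Matrix.sub_mul, Matrix.one_mul, ← Matrix.mul_assoc, add_sub_cancel]
  have hperp : Vᴴ * ((1 - V * Vᴴ) * W) = 0 := by
    rw [← Matrix.mul_assoc, Matrix.mul_sub, Matrix.mul_one, ← Matrix.mul_assoc, hV,
      Matrix.one_mul, sub_self, Matrix.zero_mul]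
  conv_rhs => rw [hW]
  rw [map_add, LinearMap.add_apply, norm_add_sq (𝕜 := 𝕜), toLpLin_mul_same (A := V),
    LinearMap.comp_apply, norm_toEuclideanLin_apply hV, inner_toEuclideanLin_toEuclideanLin, hperp,
    map_zero, LinearMap.zero_apply, inner_zero_right, map_zero, mul_zero, add_zero]

theorem norm_toEuclideanLin_sub_apply_sq {V W : Matrix m n 𝕜} (hV : Vᴴ * V = 1)
    (hW : Wᴴ * W = 1) (x : EuclideanSpace 𝕜 n) :
    ‖toEuclideanLin (V - W) x‖ ^ 2 =
      2 * ‖x‖ ^ 2 - 2 * RCLike.re ⟪x, toEuclideanLin (Vᴴ * W) x⟫_𝕜 := by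
  rw [map_sub, LinearMap.sub_apply, norm_sub_sq (𝕜 := 𝕜), inner_toEuclideanLin_toEuclideanLin,
    norm_toEuclideanLin_apply hV, norm_toEuclideanLin_apply hW]
  ring

theorem exists_mem_unitaryGroup_toEuclideanLin_eq
    (U : EuclideanSpace 𝕜 n ≃ₗᵢ[𝕜] EuclideanSpace 𝕜 n) :
    ∃ O ∈ unitaryGroup n 𝕜, ∀ x, toEuclideanLin O x = U x := by
  let u := Unitary.linearIsometryEquiv.symm U
  refine ⟨(toEuclideanCLM (n := n) (𝕜 := 𝕜)).symm u, Unitary.map_mem _ u.2, fun x ↦ ?_⟩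
  rw [← coe_toEuclideanCLM_eq_toEuclideanLin, StarAlgEquiv.apply_symm_apply]
  rfl

theorem exists_mem_unitaryGroup_le_re_inner_toEuclideanLin_mul (M : Matrix n n 𝕜) {c : ℝ}
    (hM : ∀ x, c * ‖x‖ ≤ ‖toEuclideanLin M x‖) :
    ∃ O ∈ unitaryGroup n 𝕜, ∀ x, c * ‖x‖ ^ 2 ≤ RCLike.re ⟪x, toEuclideanLin (M * O) x⟫_𝕜 := by
  obtain ⟨U, hU⟩ := (toEuclideanLin M).exists_linearIsometryEquiv_le_re_inner_apply hM
  obtain ⟨O, hO, hOU⟩ := exists_mem_unitaryGroup_toEuclideanLin_eq U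
  refine ⟨O, hO, fun x ↦ ?_⟩
  rw [toLpLin_mul_same, LinearMap.comp_apply, hOU]
  exact hU x

theorem one_sub_sq_mul_norm_le_norm_conjTranspose_mul_apply {V : Matrix m n 𝕜} {W : Matrix m l 𝕜}
    (hV : Vᴴ * V = 1) (hW : Wᴴ * W = 1) {s : ℝ}
    (hs : ∀ x, ‖toEuclideanLin ((1 - V * Vᴴ) * W) x‖ ≤ s * ‖x‖) (x : EuclideanSpace 𝕜 l) :
    (1 - s ^ 2) * ‖x‖ ≤ ‖toEuclideanLin (Vᴴ * W) x‖ := by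
  have hpyth := norm_sq_add_norm_sq_eq_norm_sq hV W x
  rw [norm_toEuclideanLin_apply hW] at hpyth
  have hsx := hs x
  have hproj := norm_nonneg (toEuclideanLin ((1 - V * Vᴴ) * W) x)
  have hle : ‖toEuclideanLin (Vᴴ * W) x‖ ≤ ‖x‖ := by
    nlinarith [norm_nonneg (toEuclideanLin (Vᴴ * W) x), norm_nonneg x]
  rcases (norm_nonneg x).eq_or_lt with hx | hx
  · rw [← hx, mul_zero]
    exact norm_nonneg _
  · nlinarith [norm_nonneg (toEuclideanLin (Vᴴ * W) x)]

end Matrix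

theorem eigenspace_alignment {n d : ℕ}
    (V Vt : Matrix (Fin n) (Fin d) ℂ) (hV : Vᴴ * V = 1) (hVt : Vtᴴ * Vt = 1) :
    ⨅ O : Matrix.unitaryGroup (Fin d) ℂ,
        ‖LinearMap.toContinuousLinearMap
          (Matrix.toEuclideanLin (V - Vt * (O : Matrix (Fin d) (Fin d) ℂ)))‖ ≤
      Real.sqrt 2 *
        ‖LinearMap.toContinuousLinearMap
          (Matrix.toEuclideanLin ((1 - V * Vᴴ) * Vt))‖ := by
  set s := ‖LinearMap.toContinuousLinearMap (toEuclideanLin ((1 - V * Vᴴ) * Vt))‖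
  obtain ⟨O, hO, hMO⟩ := exists_mem_unitaryGroup_le_re_inner_toEuclideanLin_mul (Vᴴ * Vt)
    (one_sub_sq_mul_norm_le_norm_conjTranspose_mul_apply hV hVt
      (LinearMap.toContinuousLinearMap (toEuclideanLin ((1 - V * Vᴴ) * Vt))).le_opNorm)
  have hVtO : (Vt * O)ᴴ * (Vt * O) = 1 := by
    rw [conjTranspose_mul, Matrix.mul_assoc, ← Matrix.mul_assoc Vtᴴ, hVt, Matrix.one_mul,
      ← star_eq_conjTranspose, Unitary.star_mul_self_of_mem hO]
  refine (ciInf_le ⟨0, ?_⟩ ⟨O, hO⟩).trans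
    (ContinuousLinearMap.opNorm_le_bound _ (by positivity) fun x ↦ ?_)
  · rintro _ ⟨O, rfl⟩
    exact norm_nonneg _
  rw [← pow_le_pow_iff_left₀ (norm_nonneg _) (by positivity) two_ne_zero]
  have hsub := norm_toEuclideanLin_sub_apply_sq hV hVtO x
  rw [← Matrix.mul_assoc] at hsub
  calc ‖toEuclideanLin (V - Vt * O) x‖ ^ 2
      = 2 * ‖x‖ ^ 2 - 2 * RCLike.re ⟪x, toEuclideanLin (Vᴴ * Vt * O) x⟫_ℂ := hsub
    _ ≤ 2 * s ^ 2 * ‖x‖ ^ 2 := by linarith [hMO x]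
    _ = (Real.sqrt 2 * s * ‖x‖) ^ 2 := by rw [mul_pow, mul_pow, Real.sq_sqrt zero_le_two]
end
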